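/- Let n ≥ 1, x_t, x_s, β ∈ ℝⁿ, α ∈ ℝ, σ_t, σ_s > 0, ρ ∈ (−1, 1), and σ_{t,s} = ρσ_tσ_s. Let (U_t, U_s) have the bivariate normal distribution with means x_t'β + α and x_s'β + α, standard deviations σ_t and σ_s, and correlation ρ. Then for all integers k ≥ 1 and m ≥ 1: E[(U_t^{k+1}U_s^m − U_s^{m+1}U_t^k − U_t^k U_s^m·(x_t − x_s)'β − k·U_t^{k-1}U_s^m·(σ_t² − σ_{t,s}) + m·U_s^{m-1}U_t^k·(σ_s² − σ_{t,s}))·1{U_t>0, U_s>0}] = 0. -/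

import Mathlib

open MeasureTheory

/-- Density of the nondegenerate bivariate normal distribution with means `μ₁, μ₂`,
standard deviations `σ₁, σ₂ > 0` and correlation `ρ ∈ (−1, 1)`. -/
noncomputable def binormalPDF (μ₁ μ₂ σ₁ σ₂ ρ u₁ u₂ : ℝ) : ℝ :=
  (1 / (2 * Real.pi * σ₁ * σ₂ * Real.sqrt (1 - ρ ^ 2))) *
    Real.exp (-(1 / (2 * (1 - ρ ^ 2))) *
      ((u₁ - μ₁) ^ 2 / σ₁ ^ 2 - 2 * ρ * (u₁ - μ₁) * (u₂ - μ₂) / (σ₁ * σ₂)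
        + (u₂ - μ₂) ^ 2 / σ₂ ^ 2))

/-!
Stein's identity for the bivariate normal density `f` with covariance matrix `Σ`:
`Σ ∇f = -(u - μ) f`.
Subtracting its two rows gives `(σ₁² - σ₁₂) ∂₁f - (σ₂² - σ₁₂) ∂₂f = -(u₁ - u₂ - (μ₁ - μ₂)) f`,
so the integrand is `-(σ₁² - σ₁₂) ∂₁(u₁ᵏ u₂ᵐ f) + (σ₂² - σ₁₂) ∂₂(u₁ᵏ u₂ᵐ f)`. By Fubini and the
fundamental theorem of calculus on `(0, ∞)`, each of the two terms integrates to zero over the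
quadrant: `u₁ᵏ u₂ᵐ f` vanishes on its boundary because `k, m ≥ 1`, and is integrable together with
its partial derivatives because `f` is dominated by a product of one-dimensional Gaussians.
-/

open Real Set

theorem integrable_pow_mul_exp_neg_mul_sq_sub {c : ℝ} (hc : 0 < c) (μ : ℝ) (a : ℕ) :
    Integrable fun x : ℝ => x ^ a * exp (-c * (x - μ) ^ 2) := by
  have hshift : Integrable fun y : ℝ => (y + μ) ^ a * exp (-c * y ^ 2) := by
    simp_rw [add_pow, Finset.sum_mul]
    refine integrable_finsetSum _ fun j _ => ?_
    have hj : Integrable fun y : ℝ => y ^ (j : ℝ) * exp (-c * y ^ 2) :=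
      integrable_rpow_mul_exp_neg_mul_sq hc (by linarith [j.cast_nonneg (α := ℝ)])
    refine (hj.mul_const (μ ^ (a - j) * a.choose j)).congr (ae_of_all _ fun y => ?_)
    simp only [rpow_natCast]
    ring
  simpa using hshift.comp_sub_right μ

theorem integral_Ioi_of_hasDerivAt_of_integrableOn {f f' : ℝ → ℝ} {a : ℝ}
    (hderiv : ∀ x ∈ Ici a, HasDerivAt f (f' x) x) (hf' : IntegrableOn f' (Ioi a))
    (hf : IntegrableOn f (Ioi a)) : ∫ x in Ioi a, f' x = -f a := by
  rw [integral_Ioi_of_hasDerivAt_of_tendsto' hderiv hf'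
    (tendsto_zero_of_hasDerivAt_of_integrableOn_Ioi (fun x hx => hderiv x (mem_Ici_of_Ioi hx))
      hf' hf), zero_sub]

noncomputable def binormalScore (μ₁ μ₂ σ₁ σ₂ ρ u v : ℝ) : ℝ :=
  ((u - μ₁) / σ₁ ^ 2 - ρ * (v - μ₂) / (σ₁ * σ₂)) / (1 - ρ ^ 2)

/-- The partial derivative `∂/∂u (u ^ (a + 1) * v ^ b * binormalPDF μ₁ μ₂ σ₁ σ₂ ρ u v)`. -/
noncomputable def binormalMomentPartial (μ₁ μ₂ σ₁ σ₂ ρ : ℝ) (a b : ℕ) (u v : ℝ) : ℝ :=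
  ((a + 1) * u ^ a - u ^ (a + 1) * binormalScore μ₁ μ₂ σ₁ σ₂ ρ u v) *
    binormalPDF μ₁ μ₂ σ₁ σ₂ ρ u v * v ^ b

section Binormal

variable {μ₁ μ₂ σ₁ σ₂ ρ : ℝ}

theorem binormalPDF_swap (u v : ℝ) :
    binormalPDF μ₂ μ₁ σ₂ σ₁ ρ v u = binormalPDF μ₁ μ₂ σ₁ σ₂ ρ u v := by
  unfold binormalPDF
  ring_nf

theorem binormalPDF_nonneg (hσ₁ : 0 < σ₁) (hσ₂ : 0 < σ₂) (u v : ℝ) :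
    0 ≤ binormalPDF μ₁ μ₂ σ₁ σ₂ ρ u v := by
  unfold binormalPDF
  have := pi_pos
  positivity

theorem hasDerivAt_binormalPDF_left (u v : ℝ) :
    HasDerivAt (fun u => binormalPDF μ₁ μ₂ σ₁ σ₂ ρ u v)
      (-binormalScore μ₁ μ₂ σ₁ σ₂ ρ u v * binormalPDF μ₁ μ₂ σ₁ σ₂ ρ u v) u := by
  have hexponent : HasDerivAt (fun u => -(1 / (2 * (1 - ρ ^ 2))) *
      ((u - μ₁) ^ 2 / σ₁ ^ 2 - 2 * ρ * (u - μ₁) * (v - μ₂) / (σ₁ * σ₂) + (v - μ₂) ^ 2 / σ₂ ^ 2))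
      (-binormalScore μ₁ μ₂ σ₁ σ₂ ρ u v) u := by
    have hX : HasDerivAt (fun u : ℝ => u - μ₁) 1 u := (hasDerivAt_id u).sub_const μ₁
    refine ((((hX.pow 2).div_const (σ₁ ^ 2)).sub (((hX.const_mul (2 * ρ)).mul_const
      (v - μ₂)).div_const (σ₁ * σ₂))).add_const _).const_mul _ |>.congr_deriv ?_
    unfold binormalScore
    rw [one_div, mul_inv]
    ring
  exact (hexponent.exp.const_mul _).congr_deriv (by unfold binormalPDF; ring)

theorem binormalPDF_le (hσ₁ : 0 < σ₁) (hσ₂ : 0 < σ₂) (hρ : ρ ^ 2 < 1) (u v : ℝ) :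
    binormalPDF μ₁ μ₂ σ₁ σ₂ ρ u v ≤ binormalPDF μ₁ μ₂ σ₁ σ₂ ρ μ₁ μ₂ *
      (exp (-(4 * σ₁ ^ 2)⁻¹ * (u - μ₁) ^ 2) * exp (-(4 * σ₂ ^ 2)⁻¹ * (v - μ₂) ^ 2)) := by
  have hpeak : binormalPDF μ₁ μ₂ σ₁ σ₂ ρ μ₁ μ₂ = 1 / (2 * π * σ₁ * σ₂ * √(1 - ρ ^ 2)) := by
    simp [binormalPDF]
  rw [hpeak, ← exp_add]
  unfold binormalPDF
  gcongr
  set x := (u - μ₁) / σ₁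
  set y := (v - μ₂) / σ₂
  have hquad : (x ^ 2 + y ^ 2) * (1 - ρ ^ 2) ≤ 2 * (x ^ 2 - 2 * ρ * x * y + y ^ 2) := by
    nlinarith [sq_nonneg (ρ * x - y), sq_nonneg (x - ρ * y)]
  have hQ : (u - μ₁) ^ 2 / σ₁ ^ 2 - 2 * ρ * (u - μ₁) * (v - μ₂) / (σ₁ * σ₂) + (v - μ₂) ^ 2 / σ₂ ^ 2
      = x ^ 2 - 2 * ρ * x * y + y ^ 2 := by
    simp only [x, y]; ring
  have hxy : -(4 * σ₁ ^ 2)⁻¹ * (u - μ₁) ^ 2 + -(4 * σ₂ ^ 2)⁻¹ * (v - μ₂) ^ 2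
      = -((x ^ 2 + y ^ 2) / 4) := by
    simp only [x, y]; ring
  rw [hQ, hxy, neg_mul, neg_le_neg_iff, one_div_mul_eq_div,
    div_le_div_iff₀ (by norm_num) (by linarith)]
  linarith

theorem integrable_pow_mul_binormalPDF_left (hσ₁ : 0 < σ₁) (hσ₂ : 0 < σ₂) (hρ : ρ ^ 2 < 1)
    (a : ℕ) (v : ℝ) : Integrable fun u => u ^ a * binormalPDF μ₁ μ₂ σ₁ σ₂ ρ u v := by
  have hdom := ((integrable_pow_mul_exp_neg_mul_sq_sub (c := (4 * σ₁ ^ 2)⁻¹) (by positivity) μ₁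
    a).norm.const_mul (binormalPDF μ₁ μ₂ σ₁ σ₂ ρ μ₁ μ₂ * exp (-(4 * σ₂ ^ 2)⁻¹ * (v - μ₂) ^ 2)))
  refine hdom.mono' (by unfold binormalPDF; fun_prop) (ae_of_all _ fun u => ?_)
  rw [norm_mul, norm_of_nonneg (binormalPDF_nonneg hσ₁ hσ₂ u v), norm_mul,
    norm_of_nonneg (exp_pos _).le]
  calc ‖u ^ a‖ * binormalPDF μ₁ μ₂ σ₁ σ₂ ρ u v
      ≤ ‖u ^ a‖ * (binormalPDF μ₁ μ₂ σ₁ σ₂ ρ μ₁ μ₂ * (exp (-(4 * σ₁ ^ 2)⁻¹ * (u - μ₁) ^ 2) *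
          exp (-(4 * σ₂ ^ 2)⁻¹ * (v - μ₂) ^ 2))) := by
        gcongr
        exact binormalPDF_le hσ₁ hσ₂ hρ u v
    _ = _ := by ring

theorem integrable_pow_mul_pow_mul_binormalPDF (hσ₁ : 0 < σ₁) (hσ₂ : 0 < σ₂) (hρ : ρ ^ 2 < 1)
    (a b : ℕ) :
    Integrable fun p : ℝ × ℝ => p.1 ^ a * p.2 ^ b * binormalPDF μ₁ μ₂ σ₁ σ₂ ρ p.1 p.2 := by
  have hdom := (((integrable_pow_mul_exp_neg_mul_sq_sub (c := (4 * σ₁ ^ 2)⁻¹) (by positivity) μ₁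
    a).norm.mul_prod (integrable_pow_mul_exp_neg_mul_sq_sub (c := (4 * σ₂ ^ 2)⁻¹)
    (by positivity) μ₂ b).norm).const_mul (binormalPDF μ₁ μ₂ σ₁ σ₂ ρ μ₁ μ₂))
  refine hdom.mono' (by unfold binormalPDF; fun_prop) (ae_of_all _ fun p => ?_)
  rw [norm_mul, norm_of_nonneg (binormalPDF_nonneg hσ₁ hσ₂ p.1 p.2), norm_mul, norm_mul,
    norm_mul, norm_of_nonneg (exp_pos _).le, norm_of_nonneg (exp_pos _).le]
  calc ‖p.1 ^ a‖ * ‖p.2 ^ b‖ * binormalPDF μ₁ μ₂ σ₁ σ₂ ρ p.1 p.2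
      ≤ ‖p.1 ^ a‖ * ‖p.2 ^ b‖ * (binormalPDF μ₁ μ₂ σ₁ σ₂ ρ μ₁ μ₂ *
          (exp (-(4 * σ₁ ^ 2)⁻¹ * (p.1 - μ₁) ^ 2) * exp (-(4 * σ₂ ^ 2)⁻¹ * (p.2 - μ₂) ^ 2))) := by
        gcongr
        exact binormalPDF_le hσ₁ hσ₂ hρ p.1 p.2
    _ = _ := by ring

theorem hasDerivAt_pow_mul_binormalPDF_left (a b : ℕ) (u v : ℝ) :
    HasDerivAt (fun u => u ^ (a + 1) * binormalPDF μ₁ μ₂ σ₁ σ₂ ρ u v * v ^ b)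
      (binormalMomentPartial μ₁ μ₂ σ₁ σ₂ ρ a b u v) u :=
  (((hasDerivAt_pow (a + 1) u).mul (hasDerivAt_binormalPDF_left u v)).mul_const _).congr_deriv
    (by unfold binormalMomentPartial; push_cast; ring)

theorem integral_Ioi_binormalMomentPartial (hσ₁ : 0 < σ₁) (hσ₂ : 0 < σ₂) (hρ : ρ ^ 2 < 1)
    (a b : ℕ) (v : ℝ) : ∫ u in Ioi 0, binormalMomentPartial μ₁ μ₂ σ₁ σ₂ ρ a b u v = 0 := by
  have hmoment := integrable_pow_mul_binormalPDF_left hσ₁ hσ₂ hρ (μ₁ := μ₁) (μ₂ := μ₂) (v := v)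
  have hpartial : Integrable fun u => binormalMomentPartial μ₁ μ₂ σ₁ σ₂ ρ a b u v := by
    refine ((((hmoment a).const_mul (a + 1)).sub (((hmoment (a + 2)).const_mul
      ((σ₁ ^ 2)⁻¹ * (1 - ρ ^ 2)⁻¹)).sub ((hmoment (a + 1)).const_mul
      ((μ₁ / σ₁ ^ 2 + ρ * (v - μ₂) / (σ₁ * σ₂)) / (1 - ρ ^ 2))))).mul_const (v ^ b)).congr
      (ae_of_all _ fun u => ?_)
    simp only [Pi.sub_apply]
    unfold binormalMomentPartial binormalScore
    ring
  rw [integral_Ioi_of_hasDerivAt_of_integrableOn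
    (fun u _ => hasDerivAt_pow_mul_binormalPDF_left a b u v) hpartial.integrableOn
    ((hmoment (a + 1)).mul_const (v ^ b)).integrableOn]
  simp

theorem integrable_binormalMomentPartial (hσ₁ : 0 < σ₁) (hσ₂ : 0 < σ₂) (hρ : ρ ^ 2 < 1)
    (a b : ℕ) :
    Integrable fun p : ℝ × ℝ => binormalMomentPartial μ₁ μ₂ σ₁ σ₂ ρ a b p.1 p.2 := by
  have hmoment := integrable_pow_mul_pow_mul_binormalPDF hσ₁ hσ₂ hρ (μ₁ := μ₁) (μ₂ := μ₂)
  refine (((hmoment a b).const_mul (a + 1)).sub ((((hmoment (a + 2) b).const_mul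
    ((σ₁ ^ 2)⁻¹ * (1 - ρ ^ 2)⁻¹)).sub ((hmoment (a + 1) (b + 1)).const_mul
    (ρ / (σ₁ * σ₂) / (1 - ρ ^ 2)))).add ((hmoment (a + 1) b).const_mul
    ((ρ * μ₂ / (σ₁ * σ₂) - μ₁ / σ₁ ^ 2) / (1 - ρ ^ 2))))).congr (ae_of_all _ fun p => ?_)
  simp only [Pi.add_apply, Pi.sub_apply]
  unfold binormalMomentPartial binormalScore
  ring

theorem setIntegral_binormalMomentPartial (hσ₁ : 0 < σ₁) (hσ₂ : 0 < σ₂) (hρ : ρ ^ 2 < 1)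
    (a b : ℕ) :
    ∫ p in Ioi (0 : ℝ) ×ˢ Ioi (0 : ℝ), binormalMomentPartial μ₁ μ₂ σ₁ σ₂ ρ a b p.1 p.2 = 0 := by
  have hint := (integrable_binormalMomentPartial hσ₁ hσ₂ hρ (μ₁ := μ₁) (μ₂ := μ₂)
    a b).integrableOn (s := Ioi (0 : ℝ) ×ˢ Ioi (0 : ℝ))
  rw [IntegrableOn, Measure.volume_eq_prod, ← Measure.prod_restrict] at hint
  rw [Measure.volume_eq_prod, ← Measure.prod_restrict, integral_prod_symm _ hint]
  simp only [integral_Ioi_binormalMomentPartial hσ₁ hσ₂ hρ, integral_zero]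

theorem setIntegral_binormalMomentPartial_swap (hσ₁ : 0 < σ₁) (hσ₂ : 0 < σ₂) (hρ : ρ ^ 2 < 1)
    (a b : ℕ) :
    ∫ p in Ioi (0 : ℝ) ×ˢ Ioi (0 : ℝ), binormalMomentPartial μ₁ μ₂ σ₁ σ₂ ρ a b p.2 p.1 = 0 := by
  have hswap := setIntegral_prod_swap (μ := volume) (ν := volume) (Ioi (0 : ℝ)) (Ioi (0 : ℝ))
    fun p : ℝ × ℝ => binormalMomentPartial μ₁ μ₂ σ₁ σ₂ ρ a b p.1 p.2
  simp only [← Measure.volume_eq_prod, Prod.fst_swap, Prod.snd_swap] at hswap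
  rw [hswap]
  exact setIntegral_binormalMomentPartial hσ₁ hσ₂ hρ a b

theorem setIntegral_binormal_stein_moment (hσ₁ : 0 < σ₁) (hσ₂ : 0 < σ₂) (hρ : ρ ^ 2 < 1)
    (k m : ℕ) :
    ∫ p in Ioi (0 : ℝ) ×ˢ Ioi (0 : ℝ),
        (p.1 ^ (k + 1 + 1) * p.2 ^ (m + 1) - p.2 ^ (m + 1 + 1) * p.1 ^ (k + 1)
            - p.1 ^ (k + 1) * p.2 ^ (m + 1) * (μ₁ - μ₂)
            - ((k : ℝ) + 1) * p.1 ^ k * p.2 ^ (m + 1) * (σ₁ ^ 2 - ρ * σ₁ * σ₂)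
            + ((m : ℝ) + 1) * p.2 ^ m * p.1 ^ (k + 1) * (σ₂ ^ 2 - ρ * σ₁ * σ₂))
          * binormalPDF μ₁ μ₂ σ₁ σ₂ ρ p.1 p.2 = 0 := by
  have hν : 1 - ρ ^ 2 ≠ 0 := by linarith
  have hstein : ∀ p : ℝ × ℝ,
      (p.1 ^ (k + 1 + 1) * p.2 ^ (m + 1) - p.2 ^ (m + 1 + 1) * p.1 ^ (k + 1)
            - p.1 ^ (k + 1) * p.2 ^ (m + 1) * (μ₁ - μ₂)
            - ((k : ℝ) + 1) * p.1 ^ k * p.2 ^ (m + 1) * (σ₁ ^ 2 - ρ * σ₁ * σ₂)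
            + ((m : ℝ) + 1) * p.2 ^ m * p.1 ^ (k + 1) * (σ₂ ^ 2 - ρ * σ₁ * σ₂))
          * binormalPDF μ₁ μ₂ σ₁ σ₂ ρ p.1 p.2
        = -(σ₁ ^ 2 - ρ * σ₁ * σ₂) * binormalMomentPartial μ₁ μ₂ σ₁ σ₂ ρ k (m + 1) p.1 p.2
          + (σ₂ ^ 2 - ρ * σ₁ * σ₂) * binormalMomentPartial μ₂ μ₁ σ₂ σ₁ ρ m (k + 1) p.2 p.1 := by
    intro p
    unfold binormalMomentPartial binormalScore
    rw [binormalPDF_swap]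
    field_simp
    ring
  have hleft := integrable_binormalMomentPartial hσ₁ hσ₂ hρ (μ₁ := μ₁) (μ₂ := μ₂) k (m + 1)
  have hright : Integrable fun p : ℝ × ℝ =>
      binormalMomentPartial μ₂ μ₁ σ₂ σ₁ ρ m (k + 1) p.2 p.1 :=
    (integrable_binormalMomentPartial hσ₂ hσ₁ hρ m (k + 1)).swap
  simp only [hstein]
  rw [integral_add (hleft.const_mul _).integrableOn (hright.const_mul _).integrableOn,
    integral_const_mul, integral_const_mul, setIntegral_binormalMomentPartial hσ₁ hσ₂ hρ,
    setIntegral_binormalMomentPartial_swap hσ₂ hσ₁ hρ]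
  ring

end Binormal

theorem panel_tobit_nonstationary_moment_general (n : ℕ) (xt xs β : Fin n → ℝ) (α : ℝ)
    (σt σs ρ : ℝ) (hσt : 0 < σt) (hσs : 0 < σs) (hρ : ρ ∈ Set.Ioo (-1 : ℝ) 1)
    (σts : ℝ) (hσts : σts = ρ * σt * σs) (k m : ℕ) (hk : 1 ≤ k) (hm : 1 ≤ m) :
    ∫ p in Set.Ioi (0 : ℝ) ×ˢ Set.Ioi (0 : ℝ),
        (p.1 ^ (k + 1) * p.2 ^ m - p.2 ^ (m + 1) * p.1 ^ k
            - p.1 ^ k * p.2 ^ m * (∑ i, (xt i - xs i) * β i)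
            - (k : ℝ) * p.1 ^ (k - 1) * p.2 ^ m * (σt ^ 2 - σts)
            + (m : ℝ) * p.2 ^ (m - 1) * p.1 ^ k * (σs ^ 2 - σts))
          * binormalPDF (∑ i, xt i * β i + α) (∑ i, xs i * β i + α) σt σs ρ p.1 p.2 = 0 := by
  obtain ⟨k, rfl⟩ := Nat.exists_eq_add_of_le' hk
  obtain ⟨m, rfl⟩ := Nat.exists_eq_add_of_le' hm
  have hmean : ∑ i, (xt i - xs i) * β i = (∑ i, xt i * β i + α) - (∑ i, xs i * β i + α) := by
    simp only [sub_mul, Finset.sum_sub_distrib]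
    ring
  rw [hmean, hσts]
  simp only [Nat.add_sub_cancel]
  push_cast
  exact setIntegral_binormal_stein_moment hσt hσs (by nlinarith [hρ.1, hρ.2]) k m

/-- Moment condition (Estm) for the non-stationary fixed-effects panel Tobit model:
with `(U_t, U_s)` bivariate normal with means `x_t'β + α`, `x_s'β + α`, standard deviations
`σ_t, σ_s`, and correlation `ρ` (covariance `σ_{t,s} = ρσ_tσ_s`), for all `k, m ≥ 1`,
`E[(U_t^{k+1}U_s^m − U_s^{m+1}U_t^k − U_t^k U_s^m (x_t−x_s)'β − k U_t^{k-1}U_s^m (σ_t²−σ_{t,s})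
   + m U_s^{m-1}U_t^k (σ_s²−σ_{t,s}))·1{U_t>0,U_s>0}] = 0`. -/
theorem panel_tobit_nonstationary_moment (n : ℕ) (hn : 1 ≤ n) (xt xs β : Fin n → ℝ) (α : ℝ)
    (σt σs ρ : ℝ) (hσt : 0 < σt) (hσs : 0 < σs) (hρ : ρ ∈ Set.Ioo (-1 : ℝ) 1)
    (σts : ℝ) (hσts : σts = ρ * σt * σs) (k m : ℕ) (hk : 1 ≤ k) (hm : 1 ≤ m) :
    ∫ p in Set.Ioi (0 : ℝ) ×ˢ Set.Ioi (0 : ℝ),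
        (p.1 ^ (k + 1) * p.2 ^ m - p.2 ^ (m + 1) * p.1 ^ k
            - p.1 ^ k * p.2 ^ m * (∑ i, (xt i - xs i) * β i)
            - (k : ℝ) * p.1 ^ (k - 1) * p.2 ^ m * (σt ^ 2 - σts)
            + (m : ℝ) * p.2 ^ (m - 1) * p.1 ^ k * (σs ^ 2 - σts))
          * binormalPDF (∑ i, xt i * β i + α) (∑ i, xs i * β i + α) σt σs ρ p.1 p.2 = 0 :=
  panel_tobit_nonstationary_moment_general n xt xs β α σt σs ρ hσt hσs hρ σts hσts k m hk hm
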